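/- arXiv:1508.03216 — 2 statements merged into one kernel-verified Lean document; each statement's English description precedes it below -/
import Mathlib

section
/- (GLRT as a function of the maximal invariant.) Let N ≥ 2, t ≥ 1, r ≥ 1 with m := t + r < N. For z ∈ ℂ^N and S ∈ ℂ^{N×N} Hermitian positive definite, let m₁ := z_{2.3}† S_{2.3}⁻¹ z_{2.3} and m₂ := z₃† S₃₃⁻¹ z₃ be the two components of the maximal invariant, and let E_t, E_m ∈ ℂ^{N×t}, ℂ^{N×m} consist of the first t, respectively first m, standard basis vectors of ℂ^N. Then, with P_A := A(A†A)⁻¹A† for A of full column rank, (1 + z† S^{−1/2}(I_N − P_{S^{−1/2}E_t})S^{−1/2} z) / (1 + z† S^{−1/2}(I_N − P_{S^{−1/2}E_m})S^{−1/2} z) = 1 + m₁/(1 + m₂); equivalently the GLRT statistic equals 1/p₁ with p₁ := 1/(1 + m₁/(1 + m₂)). -/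
open Matrix ComplexOrder

/-- The set 𝓖 of block upper-triangular matrices (partition sizes `t`, `r`, `q = N - m`)
with invertible diagonal blocks. -/
def memG (t r q : ℕ) (G : Matrix (Fin t ⊕ Fin r ⊕ Fin q) (Fin t ⊕ Fin r ⊕ Fin q) ℂ) : Prop :=
  (∀ i j, G (Sum.inr i) (Sum.inl j) = 0) ∧
  (∀ i j, G (Sum.inr (Sum.inr i)) (Sum.inr (Sum.inl j)) = 0) ∧
  IsUnit (G.submatrix Sum.inl Sum.inl) ∧
  IsUnit (G.submatrix (Sum.inr ∘ Sum.inl) (Sum.inr ∘ Sum.inl)) ∧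
  IsUnit (G.submatrix (Sum.inr ∘ Sum.inr) (Sum.inr ∘ Sum.inr))

/-- The set 𝓕 of vectors in ℂ^N whose last `N - t` entries are zero. -/
def memF (t r q : ℕ) (f : Fin t ⊕ Fin r ⊕ Fin q → ℂ) : Prop :=
  ∀ i, f (Sum.inr i) = 0

/-- Second block (size `r`) of a partitioned vector. -/
def blk2 {t r q : ℕ} (z : Fin t ⊕ Fin r ⊕ Fin q → ℂ) : Fin r → ℂ :=
  fun i => z (Sum.inr (Sum.inl i))

/-- Third block (size `q = N - m`) of a partitioned vector. -/
def blk3 {t r q : ℕ} (z : Fin t ⊕ Fin r ⊕ Fin q → ℂ) : Fin q → ℂ :=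
  fun i => z (Sum.inr (Sum.inr i))

/-- The `(2,2)` block `S₂₂` of a partitioned matrix. -/
def S22 {t r q : ℕ} (S : Matrix (Fin t ⊕ Fin r ⊕ Fin q) (Fin t ⊕ Fin r ⊕ Fin q) ℂ) :
    Matrix (Fin r) (Fin r) ℂ :=
  S.submatrix (Sum.inr ∘ Sum.inl) (Sum.inr ∘ Sum.inl)

/-- The `(2,3)` block `S₂₃` of a partitioned matrix. -/
def S23 {t r q : ℕ} (S : Matrix (Fin t ⊕ Fin r ⊕ Fin q) (Fin t ⊕ Fin r ⊕ Fin q) ℂ) :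
    Matrix (Fin r) (Fin q) ℂ :=
  S.submatrix (Sum.inr ∘ Sum.inl) (Sum.inr ∘ Sum.inr)

/-- The `(3,2)` block `S₃₂` of a partitioned matrix. -/
def S32 {t r q : ℕ} (S : Matrix (Fin t ⊕ Fin r ⊕ Fin q) (Fin t ⊕ Fin r ⊕ Fin q) ℂ) :
    Matrix (Fin q) (Fin r) ℂ :=
  S.submatrix (Sum.inr ∘ Sum.inr) (Sum.inr ∘ Sum.inl)

/-- The `(3,3)` block `S₃₃` of a partitioned matrix. -/
def S33 {t r q : ℕ} (S : Matrix (Fin t ⊕ Fin r ⊕ Fin q) (Fin t ⊕ Fin r ⊕ Fin q) ℂ) :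
    Matrix (Fin q) (Fin q) ℂ :=
  S.submatrix (Sum.inr ∘ Sum.inr) (Sum.inr ∘ Sum.inr)

/-- `z_{2.3} = z₂ - S₂₃ S₃₃⁻¹ z₃`. -/
noncomputable def zdot {t r q : ℕ} (z : Fin t ⊕ Fin r ⊕ Fin q → ℂ)
    (S : Matrix (Fin t ⊕ Fin r ⊕ Fin q) (Fin t ⊕ Fin r ⊕ Fin q) ℂ) : Fin r → ℂ :=
  blk2 z - (S23 S * (S33 S)⁻¹) *ᵥ blk3 z

/-- `S_{2.3} = S₂₂ - S₂₃ S₃₃⁻¹ S₃₂`. -/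
noncomputable def Sdot {t r q : ℕ}
    (S : Matrix (Fin t ⊕ Fin r ⊕ Fin q) (Fin t ⊕ Fin r ⊕ Fin q) ℂ) :
    Matrix (Fin r) (Fin r) ℂ :=
  S22 S - S23 S * (S33 S)⁻¹ * S32 S

/-- The maximal invariant
`t₁(z,S) = (z_{2.3}† S_{2.3}⁻¹ z_{2.3}, z₃† S₃₃⁻¹ z₃)` for the case `m < N`. -/
noncomputable def t1 {t r q : ℕ} (z : Fin t ⊕ Fin r ⊕ Fin q → ℂ)
    (S : Matrix (Fin t ⊕ Fin r ⊕ Fin q) (Fin t ⊕ Fin r ⊕ Fin q) ℂ) : ℂ × ℂ :=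
  (star (zdot z S) ⬝ᵥ ((Sdot S)⁻¹ *ᵥ zdot z S),
   star (blk3 z) ⬝ᵥ ((S33 S)⁻¹ *ᵥ blk3 z))

/-- `E_t`: the matrix of the first `t` standard basis vectors of ℂ^N, `N = t + r + q`. -/
def Et (t r q : ℕ) : Matrix (Fin t ⊕ Fin r ⊕ Fin q) (Fin t) ℂ :=
  Matrix.of fun i j => if i = Sum.inl j then 1 else 0

/-- `E_m`: the matrix of the first `m = t + r` standard basis vectors of ℂ^N. -/
def Em (t r q : ℕ) : Matrix (Fin t ⊕ Fin r ⊕ Fin q) (Fin t ⊕ Fin r) ℂ :=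
  Matrix.of fun i j => if i = Sum.map id Sum.inl j then 1 else 0

/-- The orthogonal projection `P_A = A (A† A)⁻¹ A†` onto the column space of `A`. -/
noncomputable def proj {n : Type*} {k : Type*} [Fintype n] [Fintype k] [DecidableEq n]
    [DecidableEq k] (A : Matrix n k ℂ) : Matrix n n ℂ :=
  A * (Aᴴ * A)⁻¹ * Aᴴ

/-! With `R² = S⁻¹`, `R (I - P_{RE}) R = S⁻¹ - S⁻¹E(EᴴS⁻¹E)⁻¹EᴴS⁻¹`. When the columns of `E`
select a block of coordinates, this is the Schur complement of that block in `S⁻¹`, which is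
the inverse of the complementary diagonal block of `S`, padded by zeros. Hence the numerator is
`1 + z_{23}ᴴ S_{(23)(23)}⁻¹ z_{23}` and the denominator is `1 + m₂`, where `m₂ = z₃ᴴ S₃₃⁻¹ z₃`.
Splitting the quadratic form of `S_{(23)(23)}⁻¹` along the blocks `2, 3` gives `m₁ + m₂`, and
`(1 + m₁ + m₂) / (1 + m₂) = 1 + m₁ / (1 + m₂)`. -/

namespace Matrix

section Blocks

variable {R : Type*} {α β : Type*}

section CommRing

variable [CommRing R] [Fintype α] [DecidableEq α]

theorem sub_mul_inv_toBlocks₁₁_mul_eq_fromBlocks (T : Matrix (α ⊕ β) (α ⊕ β) R)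
    [Invertible T.toBlocks₁₁] :
    T - T.submatrix id Sum.inl * T.toBlocks₁₁⁻¹ * T.submatrix Sum.inl id =
      fromBlocks 0 0 0 (T.toBlocks₂₂ - T.toBlocks₂₁ * T.toBlocks₁₁⁻¹ * T.toBlocks₁₂) := by
  have hcol : T.submatrix id Sum.inl = fromRows T.toBlocks₁₁ T.toBlocks₂₁ := by
    ext (i | i) j <;> rfl
  have hrow : T.submatrix Sum.inl id = fromCols T.toBlocks₁₁ T.toBlocks₁₂ := by
    ext i (j | j) <;> rfl
  rw [hcol, hrow, fromRows_mul, fromRows_mul_fromCols, mul_inv_of_invertible, Matrix.one_mul,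
    Matrix.one_mul, Matrix.mul_assoc T.toBlocks₂₁, inv_mul_of_invertible, Matrix.mul_one]
  conv_lhs => rw [← fromBlocks_toBlocks T]
  ext (i | i) (j | j) <;> simp

theorem toBlocks₂₂_sub_eq_inv_toBlocks₂₂_inv [Fintype β] [DecidableEq β]
    (T : Matrix (α ⊕ β) (α ⊕ β) R) [Invertible T] [Invertible T.toBlocks₁₁] :
    T.toBlocks₂₂ - T.toBlocks₂₁ * T.toBlocks₁₁⁻¹ * T.toBlocks₁₂ = T⁻¹.toBlocks₂₂⁻¹ := by
  let _ : Invertible (fromBlocks T.toBlocks₁₁ T.toBlocks₁₂ T.toBlocks₂₁ T.toBlocks₂₂) :=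
    ‹Invertible T›.copy _ (fromBlocks_toBlocks T)
  let _ := invertibleOfFromBlocks₁₁Invertible T.toBlocks₁₁ T.toBlocks₁₂ T.toBlocks₂₁ T.toBlocks₂₂
  conv_rhs => rw [← fromBlocks_toBlocks T]
  rw [← invOf_eq_nonsing_inv (fromBlocks _ _ _ _), invOf_fromBlocks₁₁_eq, toBlocks_fromBlocks₂₂,
    invOf_eq_nonsing_inv (T.toBlocks₂₂ - _), inv_inv_of_invertible, invOf_eq_nonsing_inv]

end CommRing

section Semiring

variable [Semiring R] {k m n : Type*} [Fintype n] [DecidableEq n]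

theorem mul_one_submatrix_id (M : Matrix m n R) (e : k → n) :
    M * (1 : Matrix n n R).submatrix id e = M.submatrix id e := by
  simpa using mul_submatrix_one (Equiv.refl n) e M

theorem conjTranspose_one_submatrix_id_mul [StarRing R] (e : k → n) (M : Matrix n m R) :
    ((1 : Matrix n n R).submatrix id e)ᴴ * M = M.submatrix e id := by
  simpa [conjTranspose_submatrix] using one_submatrix_mul e (Equiv.refl n) M

theorem star_dotProduct_fromBlocks_zero_mulVec [Fintype α] [Fintype β] [Star R]
    (X : Matrix β β R) (z : α ⊕ β → R) :
    star z ⬝ᵥ (fromBlocks 0 0 0 X *ᵥ z) = star (z ∘ Sum.inr) ⬝ᵥ (X *ᵥ (z ∘ Sum.inr)) := by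
  simp [dotProduct, mulVec, Fintype.sum_sum_type, fromBlocks, Function.comp]

end Semiring

end Blocks

section PosDef

variable {𝕜 : Type*} [RCLike 𝕜] {α β : Type*} [Fintype α] [Fintype β] [DecidableEq α]
  [DecidableEq β]

theorem PosDef.inv_sub_mul_inv_toBlocks₁₁_mul_eq_fromBlocks {S : Matrix (α ⊕ β) (α ⊕ β) 𝕜}
    (hS : S.PosDef) :
    S⁻¹ - S⁻¹.submatrix id Sum.inl * S⁻¹.toBlocks₁₁⁻¹ * S⁻¹.submatrix Sum.inl id =
      fromBlocks 0 0 0 S.toBlocks₂₂⁻¹ := by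
  let _ : Invertible S := hS.isUnit.invertible
  let _ : Invertible S⁻¹.toBlocks₁₁ := (hS.inv.submatrix Sum.inl_injective).isUnit.invertible
  rw [sub_mul_inv_toBlocks₁₁_mul_eq_fromBlocks, toBlocks₂₂_sub_eq_inv_toBlocks₂₂_inv,
    inv_inv_of_invertible]

theorem PosDef.star_sumElim_dotProduct_inv_mulVec {M : Matrix (α ⊕ β) (α ⊕ β) 𝕜}
    (hM : M.PosDef) (x : α → 𝕜) (y : β → 𝕜) :
    star (Sum.elim x y) ⬝ᵥ (M⁻¹ *ᵥ Sum.elim x y) =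
      star (x - (M.toBlocks₁₂ * M.toBlocks₂₂⁻¹) *ᵥ y) ⬝ᵥ
        ((M.toBlocks₁₁ - M.toBlocks₁₂ * M.toBlocks₂₂⁻¹ * M.toBlocks₂₁)⁻¹ *ᵥ
          (x - (M.toBlocks₁₂ * M.toBlocks₂₂⁻¹) *ᵥ y)) +
      star y ⬝ᵥ (M.toBlocks₂₂⁻¹ *ᵥ y) := by
  set A := M.toBlocks₁₁
  set B := M.toBlocks₁₂
  set D := M.toBlocks₂₂
  have hC : M.toBlocks₂₁ = Bᴴ := by
    ext i j
    exact (hM.isHermitian.apply _ _).symm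
  rw [hC]
  have hD : D.PosDef := hM.submatrix Sum.inr_injective
  let _ : Invertible D := hD.isUnit.invertible
  let _ : Invertible (fromBlocks A B Bᴴ D) :=
    hM.isUnit.invertible.copy _ (by rw [← hC, fromBlocks_toBlocks])
  let _ := invertibleOfFromBlocks₂₂Invertible A B Bᴴ D
  set Δ := A - B * D⁻¹ * Bᴴ
  have hD_inv : D⁻¹ᴴ = D⁻¹ := hD.1.inv
  have hM_inv : M⁻¹ = fromBlocks Δ⁻¹ (-(Δ⁻¹ * B * D⁻¹)) (-(D⁻¹ * Bᴴ * Δ⁻¹))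
      (D⁻¹ + D⁻¹ * Bᴴ * Δ⁻¹ * B * D⁻¹) := by
    conv_lhs => rw [← fromBlocks_toBlocks M, hC]
    rw [← invOf_eq_nonsing_inv, invOf_fromBlocks₂₂_eq]
    simp only [invOf_eq_nonsing_inv]
    rfl
  rw [hM_inv]
  simp only [fromBlocks_mulVec, Function.star_sumElim, sumElim_dotProduct_sumElim,
    Matrix.neg_mulVec, dotProduct_add, dotProduct_neg, add_mulVec,
    mulVec_sub, dotProduct_sub, star_sub, star_mulVec,
    dotProduct_mulVec, vecMul_vecMul, conjTranspose_mul, hD_inv,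
    Matrix.mul_assoc, Sum.elim_comp_inl, Sum.elim_comp_inr]
  simp only [Matrix.sub_vecMul, vecMul_vecMul, ← Matrix.mul_assoc, sub_dotProduct]
  abel

end PosDef

section Projection

variable {n k α β : Type*} [Fintype n] [Fintype k] [DecidableEq n] [DecidableEq k]

theorem mul_one_sub_proj_mul_eq {R T : Matrix n n ℂ} (hR : Rᴴ = R) (hRT : R * R = T)
    (e : k → n) :
    R * (1 - proj (R * (1 : Matrix n n ℂ).submatrix id e)) * R =
      T - T.submatrix id e * (T.submatrix e e)⁻¹ * T.submatrix e id := by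
  have hgram : (R * (1 : Matrix n n ℂ).submatrix id e)ᴴ * (R * (1 : Matrix n n ℂ).submatrix id e) =
      T.submatrix e e := by
    rw [conjTranspose_mul, hR, Matrix.mul_assoc, ← Matrix.mul_assoc R, hRT, mul_one_submatrix_id,
      conjTranspose_one_submatrix_id_mul, submatrix_submatrix]
    rfl
  rw [proj, hgram, Matrix.mul_sub, Matrix.sub_mul, Matrix.mul_one, hRT, conjTranspose_mul, hR,
    ← mul_one_submatrix_id T, ← conjTranspose_one_submatrix_id_mul e T, ← hRT]
  simp only [Matrix.mul_assoc]

theorem PosDef.star_dotProduct_mul_one_sub_proj_mul_mulVec [Fintype α] [Fintype β]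
    [DecidableEq α] [DecidableEq β] {S R : Matrix n n ℂ} (hS : S.PosDef) (hR : Rᴴ = R)
    (hRS : R * R = S⁻¹) (σ : α ⊕ β ≃ n) (z : n → ℂ) :
    star z ⬝ᵥ ((R * (1 - proj (R * (1 : Matrix n n ℂ).submatrix id (σ ∘ Sum.inl))) * R) *ᵥ z) =
      star (z ∘ σ ∘ Sum.inr) ⬝ᵥ
        ((S.submatrix (σ ∘ Sum.inr) (σ ∘ Sum.inr))⁻¹ *ᵥ (z ∘ σ ∘ Sum.inr)) := by
  set S' := S.submatrix σ σ
  have hS'_inv : S'⁻¹ = S⁻¹.submatrix σ σ := inv_submatrix_equiv S σ σ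
  have hreindex : S⁻¹ - S⁻¹.submatrix id (σ ∘ Sum.inl) *
        (S⁻¹.submatrix (σ ∘ Sum.inl) (σ ∘ Sum.inl))⁻¹ * S⁻¹.submatrix (σ ∘ Sum.inl) id =
      (S'⁻¹ - S'⁻¹.submatrix id Sum.inl * S'⁻¹.toBlocks₁₁⁻¹ * S'⁻¹.submatrix Sum.inl id).submatrix
        σ.symm σ.symm := by
    rw [hS'_inv]
    ext i j
    simp only [submatrix_apply, sub_apply, Matrix.mul_apply, Equiv.apply_symm_apply, id_eq]
    rfl
  rw [mul_one_sub_proj_mul_eq hR hRS, hreindex,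
    (hS.submatrix σ.injective).inv_sub_mul_inv_toBlocks₁₁_mul_eq_fromBlocks,
    submatrix_mulVec_equiv, Equiv.symm_symm, dotProduct_comp_equiv_symm]
  exact star_dotProduct_fromBlocks_zero_mulVec _ (z ∘ σ)

end Projection

end Matrix

theorem Et_eq_one_submatrix (t r q : ℕ) :
    Et t r q = (1 : Matrix (Fin t ⊕ Fin r ⊕ Fin q) (Fin t ⊕ Fin r ⊕ Fin q) ℂ).submatrix id
      (Equiv.refl _ ∘ Sum.inl) :=
  rfl

theorem Em_eq_one_submatrix (t r q : ℕ) :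
    Em t r q = (1 : Matrix (Fin t ⊕ Fin r ⊕ Fin q) (Fin t ⊕ Fin r ⊕ Fin q) ℂ).submatrix id
      (Equiv.sumAssoc (Fin t) (Fin r) (Fin q) ∘ Sum.inl) := by
  ext i (j | j) <;> rfl

theorem stmt8_general (t r q : ℕ)
    (z : Fin t ⊕ Fin r ⊕ Fin q → ℂ)
    (S : Matrix (Fin t ⊕ Fin r ⊕ Fin q) (Fin t ⊕ Fin r ⊕ Fin q) ℂ) (hS : S.PosDef)
    (R : Matrix (Fin t ⊕ Fin r ⊕ Fin q) (Fin t ⊕ Fin r ⊕ Fin q) ℂ)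
    (hR : R.PosDef) (hRS : R * R = S⁻¹) :
    (1 + star z ⬝ᵥ ((R * (1 - proj (R * Et t r q)) * R) *ᵥ z)) /
        (1 + star z ⬝ᵥ ((R * (1 - proj (R * Em t r q)) * R) *ᵥ z)) =
      1 + (t1 z S).1 / (1 + (t1 z S).2) ∧
    (1 + star z ⬝ᵥ ((R * (1 - proj (R * Et t r q)) * R) *ᵥ z)) /
        (1 + star z ⬝ᵥ ((R * (1 - proj (R * Em t r q)) * R) *ᵥ z)) =
      1 / (1 / (1 + (t1 z S).1 / (1 + (t1 z S).2))) := by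
  have hNum :
      star z ⬝ᵥ ((R * (1 - proj (R * Et t r q)) * R) *ᵥ z) = (t1 z S).1 + (t1 z S).2 := by
    rw [Et_eq_one_submatrix, hS.star_dotProduct_mul_one_sub_proj_mul_mulVec hR.1 hRS,
      Equiv.coe_refl, Function.id_comp, ← Sum.elim_comp_inl_inr (z ∘ Sum.inr),
      (hS.submatrix Sum.inr_injective).star_sumElim_dotProduct_inv_mulVec]
    rfl
  have hDen : star z ⬝ᵥ ((R * (1 - proj (R * Em t r q)) * R) *ᵥ z) = (t1 z S).2 := by
    rw [Em_eq_one_submatrix, hS.star_dotProduct_mul_one_sub_proj_mul_mulVec hR.1 hRS]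
    rfl
  have hm₂ : 0 ≤ (t1 z S).2 :=
    (hS.submatrix (Sum.inr_injective.comp Sum.inr_injective)).inv.posSemidef.dotProduct_mulVec_nonneg
      (blk3 z)
  have hden : 1 + (t1 z S).2 ≠ 0 := (add_pos_of_pos_of_nonneg one_pos hm₂).ne'
  have hratio : (1 + ((t1 z S).1 + (t1 z S).2)) / (1 + (t1 z S).2) =
      1 + (t1 z S).1 / (1 + (t1 z S).2) := by
    field_simp
    ring
  rw [hNum, hDen, hratio, one_div_one_div]
  exact ⟨rfl, rfl⟩

/-- GLRT as a function of the maximal invariant: with `m₁`, `m₂` the two components of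
the maximal invariant and `R = S^{-1/2}` the Hermitian positive definite inverse square
root of `S`,
`(1 + z†S^{-1/2}(I − P_{S^{-1/2}E_t})S^{-1/2}z) / (1 + z†S^{-1/2}(I − P_{S^{-1/2}E_m})S^{-1/2}z)
  = 1 + m₁/(1 + m₂) = 1/p₁` with `p₁ = 1/(1 + m₁/(1 + m₂))`. -/
theorem stmt8 (t r q : ℕ) (ht : 1 ≤ t) (hr : 1 ≤ r) (hq : 1 ≤ q)
    (z : Fin t ⊕ Fin r ⊕ Fin q → ℂ)
    (S : Matrix (Fin t ⊕ Fin r ⊕ Fin q) (Fin t ⊕ Fin r ⊕ Fin q) ℂ) (hS : S.PosDef)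
    (R : Matrix (Fin t ⊕ Fin r ⊕ Fin q) (Fin t ⊕ Fin r ⊕ Fin q) ℂ)
    (hR : R.PosDef) (hRS : R * R = S⁻¹) :
    (1 + star z ⬝ᵥ ((R * (1 - proj (R * Et t r q)) * R) *ᵥ z)) /
        (1 + star z ⬝ᵥ ((R * (1 - proj (R * Em t r q)) * R) *ᵥ z)) =
      1 + (t1 z S).1 / (1 + (t1 z S).2) ∧
    (1 + star z ⬝ᵥ ((R * (1 - proj (R * Et t r q)) * R) *ᵥ z)) /
        (1 + star z ⬝ᵥ ((R * (1 - proj (R * Em t r q)) * R) *ᵥ z)) =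
      1 / (1 / (1 + (t1 z S).1 / (1 + (t1 z S).2))) :=
  stmt8_general t r q z S hS R hR hRS
end

section
/- (2S-GLRT as a function of the maximal invariant.) Let N ≥ 2, t ≥ 1, r ≥ 1 with m := t + r < N, z ∈ ℂ^N, and S ∈ ℂ^{N×N} Hermitian positive definite. With E_t, E_m the matrices of the first t, respectively first m, standard basis vectors of ℂ^N and P_A := A(A†A)⁻¹A†, the two-step GLRT statistic satisfies z† S^{−1/2}(I_N − P_{S^{−1/2}E_t})S^{−1/2} z − z† S^{−1/2}(I_N − P_{S^{−1/2}E_m})S^{−1/2} z = z_{2.3}† S_{2.3}⁻¹ z_{2.3} = m₁; equivalently it equals (1 − p₁)/(p₁p₂) with p₁ := 1/(1 + m₁/(1 + m₂)), p₂ := 1/(1 + m₂), m₂ := z₃† S₃₃⁻¹ z₃. -/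
/-!
With `R² = S⁻¹` and `E` the inclusion of a leading block of coordinates,
`R (I - P_{RE}) R = S⁻¹ - S⁻¹ E (E† S⁻¹ E)⁻¹ E† S⁻¹`. Writing `S⁻¹` through the block LDL
factorisation built on the Schur complement of the trailing block `D` of `S`, this matrix
vanishes outside the trailing block, where it equals `D⁻¹`. Hence the `E_t`-term of the statistic
is `(z₂, z₃)† M⁻¹ (z₂, z₃)` for the trailing `(r + q)`-block `M` of `S`, and the `E_m`-term is
`z₃† S₃₃⁻¹ z₃ = m₂`. The same factorisation, now of `M⁻¹`, splits the first quadratic form as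
`z_{2.3}† S_{2.3}⁻¹ z_{2.3} + z₃† S₃₃⁻¹ z₃ = m₁ + m₂`. The expression in `p₁, p₂` is field
arithmetic, legitimate because `m₁, m₂ ≥ 0` keeps the denominators away from zero.
-/

open Matrix ComplexOrder

namespace Matrix

section Schur

variable {R : Type*} [CommRing R] {α β : Type*} [Fintype α] [Fintype β] [DecidableEq α]
  [DecidableEq β]

noncomputable def schurComplement (M : Matrix (α ⊕ β) (α ⊕ β) R) : Matrix α α R :=
  M.toBlocks₁₁ - M.toBlocks₁₂ * M.toBlocks₂₂⁻¹ * M.toBlocks₂₁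

theorem fromBlocks_one_neg_mul_fromBlocks_one (X : Matrix α β R) :
    fromBlocks 1 (-X) 0 1 * fromBlocks 1 X 0 1 = (1 : Matrix (α ⊕ β) (α ⊕ β) R) := by
  simp [fromBlocks_multiply]

theorem fromBlocks_one_zero_neg_mul_fromBlocks_one (X : Matrix β α R) :
    fromBlocks 1 0 (-X) 1 * fromBlocks 1 0 X 1 = (1 : Matrix (α ⊕ β) (α ⊕ β) R) := by
  simp [fromBlocks_multiply]

theorem inv_eq_fromBlocks_mul_fromBlocks_mul_fromBlocks {M : Matrix (α ⊕ β) (α ⊕ β) R}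
    (hD : IsUnit M.toBlocks₂₂) (hS : IsUnit (schurComplement M)) :
    M⁻¹ = fromBlocks 1 0 (-(M.toBlocks₂₂⁻¹ * M.toBlocks₂₁)) 1 *
      fromBlocks (schurComplement M)⁻¹ 0 0 M.toBlocks₂₂⁻¹ *
      fromBlocks 1 (-(M.toBlocks₁₂ * M.toBlocks₂₂⁻¹)) 0 1 := by
  have := hD.invertible
  have hΔ : fromBlocks (schurComplement M)⁻¹ 0 0 M.toBlocks₂₂⁻¹ *
      fromBlocks (schurComplement M) 0 0 M.toBlocks₂₂ = 1 := by
    rw [fromBlocks_multiply, ← fromBlocks_one]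
    simp [nonsing_inv_mul _ ((isUnit_iff_isUnit_det _).mp hS),
      nonsing_inv_mul _ ((isUnit_iff_isUnit_det _).mp hD)]
  have hLDU := fromBlocks_eq_of_invertible₂₂ M.toBlocks₁₁ M.toBlocks₁₂ M.toBlocks₂₁ M.toBlocks₂₂
  rw [fromBlocks_toBlocks, invOf_eq_nonsing_inv, ← schurComplement] at hLDU
  refine inv_eq_left_inv ?_
  conv_lhs => enter [2]; rw [hLDU]
  simp only [Matrix.mul_assoc]
  rw [← Matrix.mul_assoc (fromBlocks 1 (-_) 0 1), fromBlocks_one_neg_mul_fromBlocks_one,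
    Matrix.one_mul, ← Matrix.mul_assoc (fromBlocks _ 0 0 _), hΔ, Matrix.one_mul,
    fromBlocks_one_zero_neg_mul_fromBlocks_one]

theorem inv_sub_inv_mul_fromBlocks_mul_inv {M : Matrix (α ⊕ β) (α ⊕ β) R}
    (hD : IsUnit M.toBlocks₂₂) (hS : IsUnit (schurComplement M)) :
    M⁻¹ - M⁻¹ * fromBlocks (M⁻¹.toBlocks₁₁)⁻¹ 0 0 0 * M⁻¹ = fromBlocks 0 0 0 M.toBlocks₂₂⁻¹ := by
  have hS' := (isUnit_iff_isUnit_det _).mp hS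
  have hT : M⁻¹.toBlocks₁₁ = (schurComplement M)⁻¹ := by
    rw [inv_eq_fromBlocks_mul_fromBlocks_mul_fromBlocks hD hS]
    simp [fromBlocks_multiply]
  rw [hT, nonsing_inv_nonsing_inv _ hS', inv_eq_fromBlocks_mul_fromBlocks_mul_fromBlocks hD hS]
  simp [fromBlocks_multiply, Matrix.mul_assoc, mul_nonsing_inv_cancel_left _ _ hS',
    mul_nonsing_inv _ hS', sub_eq_add_neg, fromBlocks_neg, fromBlocks_add]

variable [StarRing R]

omit [Fintype α] in
theorem conjTranspose_fromBlocks_one_neg_mul_inv {M : Matrix (α ⊕ β) (α ⊕ β) R}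
    (hM : M.IsHermitian) :
    (fromBlocks 1 (-(M.toBlocks₁₂ * M.toBlocks₂₂⁻¹)) 0 1 : Matrix (α ⊕ β) (α ⊕ β) R)ᴴ =
      fromBlocks 1 0 (-(M.toBlocks₂₂⁻¹ * M.toBlocks₂₁)) 1 := by
  obtain ⟨-, h₁₂, -, h₂₂⟩ := isHermitian_fromBlocks_iff.mp ((fromBlocks_toBlocks M).symm ▸ hM)
  simp [fromBlocks_conjTranspose, conjTranspose_nonsing_inv, h₁₂, h₂₂.eq]

theorem dotProduct_inv_mulVec_eq_add {M : Matrix (α ⊕ β) (α ⊕ β) R} (hM : M.IsHermitian)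
    (hD : IsUnit M.toBlocks₂₂) (hS : IsUnit (schurComplement M)) (w : α ⊕ β → R) :
    star w ⬝ᵥ (M⁻¹ *ᵥ w) =
      star (w ∘ Sum.inl - (M.toBlocks₁₂ * M.toBlocks₂₂⁻¹) *ᵥ (w ∘ Sum.inr)) ⬝ᵥ
        ((schurComplement M)⁻¹ *ᵥ
          (w ∘ Sum.inl - (M.toBlocks₁₂ * M.toBlocks₂₂⁻¹) *ᵥ (w ∘ Sum.inr))) +
      star (w ∘ Sum.inr) ⬝ᵥ (M.toBlocks₂₂⁻¹ *ᵥ (w ∘ Sum.inr)) := by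
  have hLw : fromBlocks 1 (-(M.toBlocks₁₂ * M.toBlocks₂₂⁻¹)) 0 1 *ᵥ w =
      Sum.elim (w ∘ Sum.inl - (M.toBlocks₁₂ * M.toBlocks₂₂⁻¹) *ᵥ (w ∘ Sum.inr)) (w ∘ Sum.inr) := by
    rw [← Sum.elim_comp_inl_inr w, fromBlocks_mulVec]
    simp [sub_eq_add_neg, neg_mulVec]
  rw [inv_eq_fromBlocks_mul_fromBlocks_mul_fromBlocks hD hS,
    ← conjTranspose_fromBlocks_one_neg_mul_inv hM, ← mulVec_mulVec, ← mulVec_mulVec,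
    dotProduct_mulVec, ← star_mulVec, hLw, fromBlocks_mulVec]
  simp [Function.star_sumElim, sumElim_dotProduct_sumElim]

omit [Fintype β] [DecidableEq β] in
theorem fromRows_one_zero_mul_mul_conjTranspose (X : Matrix α α R) :
    (fromRows 1 0 : Matrix (α ⊕ β) α R) * X * (fromRows 1 0 : Matrix (α ⊕ β) α R)ᴴ =
      fromBlocks X 0 0 0 := by
  rw [conjTranspose_fromRows_eq_fromCols_conjTranspose, fromRows_mul, fromRows_mul_fromCols]
  simp

omit [DecidableEq β] in
theorem conjTranspose_fromRows_one_zero_mul_mul (N : Matrix (α ⊕ β) (α ⊕ β) R) :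
    (fromRows 1 0 : Matrix (α ⊕ β) α R)ᴴ * N * (fromRows 1 0 : Matrix (α ⊕ β) α R) =
      N.toBlocks₁₁ := by
  rw [conjTranspose_fromRows_eq_fromCols_conjTranspose, ← fromBlocks_toBlocks N,
    fromCols_mul_fromBlocks, fromCols_mul_fromRows]
  simp

omit [DecidableEq α] [DecidableEq β] in
theorem dotProduct_fromBlocks_zero_mulVec (Y : Matrix β β R) (z : α ⊕ β → R) :
    star z ⬝ᵥ (fromBlocks 0 0 0 Y *ᵥ z) = star (z ∘ Sum.inr) ⬝ᵥ (Y *ᵥ (z ∘ Sum.inr)) := by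
  conv_lhs => rw [← Sum.elim_comp_inl_inr z]
  rw [fromBlocks_mulVec, Function.star_sumElim, sumElim_dotProduct_sumElim]
  simp

end Schur

theorem dotProduct_submatrix_mulVec {R m n : Type*} [CommRing R] [StarRing R] [Fintype m]
    [Fintype n] (M : Matrix n n R) (e : m ≃ n) (x : n → R) :
    star (x ∘ e) ⬝ᵥ (M.submatrix e e *ᵥ (x ∘ e)) = star x ⬝ᵥ (M *ᵥ x) := by
  rw [submatrix_mulVec_equiv, Function.comp_assoc, e.self_comp_symm, Function.comp_id]
  exact comp_equiv_dotProduct_comp_equiv (star x) (M *ᵥ x) e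

section PosDef

variable {𝕜 : Type*} [RCLike 𝕜] {α β : Type*} [Fintype α] [Fintype β] [DecidableEq α]
  [DecidableEq β] {M : Matrix (α ⊕ β) (α ⊕ β) 𝕜}

omit [Fintype α] [Fintype β] [DecidableEq α] [DecidableEq β] in
theorem PosDef.toBlocks₂₂ (hM : M.PosDef) : M.toBlocks₂₂.PosDef :=
  hM.submatrix Sum.inr_injective

theorem PosDef.schurComplement (hM : M.PosDef) : (schurComplement M).PosDef := by
  have hD := hM.toBlocks₂₂
  have := hD.isUnit.invertible
  obtain ⟨-, h₁₂, -, -⟩ := isHermitian_fromBlocks_iff.mp ((fromBlocks_toBlocks M).symm ▸ hM.1)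
  have hpsd : (Matrix.schurComplement M).PosSemidef := by
    rw [Matrix.schurComplement, ← h₁₂, ← PosDef.fromBlocks₂₂ _ _ hD, h₁₂, fromBlocks_toBlocks]
    exact hM.posSemidef
  refine hpsd.posDef_iff_isUnit.mpr ?_
  have : Invertible (fromBlocks M.toBlocks₁₁ M.toBlocks₁₂ M.toBlocks₂₁ M.toBlocks₂₂) := by
    rw [fromBlocks_toBlocks]
    exact hM.isUnit.invertible
  have := invertibleOfFromBlocks₂₂Invertible M.toBlocks₁₁ M.toBlocks₁₂ M.toBlocks₂₁ M.toBlocks₂₂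
  simpa [Matrix.schurComplement, invOf_eq_nonsing_inv] using
    isUnit_of_invertible (M.toBlocks₁₁ - M.toBlocks₁₂ * ⅟M.toBlocks₂₂ * M.toBlocks₂₁)

end PosDef

end Matrix

open Matrix

section Projection

variable {n k : Type*} [Fintype n] [Fintype k] [DecidableEq n] [DecidableEq k]

theorem proj_submatrix {m : Type*} [Fintype m] [DecidableEq m] (A : Matrix n k ℂ) (e : m ≃ n) :
    proj (A.submatrix e id) = (proj A).submatrix e e := by
  have hA : (A.submatrix e id)ᴴ * A.submatrix e id = Aᴴ * A := by
    rw [conjTranspose_submatrix, submatrix_mul_equiv, submatrix_id_id]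
  rw [proj, proj, hA, conjTranspose_submatrix, ← submatrix_id_id (Aᴴ * A)⁻¹,
    ← submatrix_mul _ _ _ _ _ Function.bijective_id,
    ← submatrix_mul _ _ _ _ _ Function.bijective_id, submatrix_id_id]

theorem submatrix_mul_one_sub_proj_mul {m : Type*} [Fintype m] [DecidableEq m]
    (R : Matrix n n ℂ) (E : Matrix n k ℂ) (e : m ≃ n) :
    (R * (1 - proj (R * E)) * R).submatrix e e =
      R.submatrix e e * (1 - proj (R.submatrix e e * E.submatrix e id)) * R.submatrix e e := by
  have h1 : 1 - (proj (R * E)).submatrix e e = (1 - proj (R * E)).submatrix e e := by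
    rw [← submatrix_one_equiv e]
    rfl
  rw [submatrix_mul_equiv, proj_submatrix, h1, submatrix_mul_equiv, submatrix_mul_equiv]

theorem mul_one_sub_proj_mul {R : Matrix n n ℂ} (hR : R.IsHermitian) (E : Matrix n k ℂ) :
    R * (1 - proj (R * E)) * R =
      R * R - R * R * (E * (Eᴴ * (R * R) * E)⁻¹ * Eᴴ) * (R * R) := by
  simp only [proj, conjTranspose_mul, hR.eq, Matrix.mul_sub, Matrix.sub_mul, Matrix.mul_one,
    Matrix.mul_assoc]

end Projection

section Compression

variable {α β : Type*} [Fintype α] [Fintype β] [DecidableEq α] [DecidableEq β]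

theorem mul_one_sub_proj_fromRows_mul {S R : Matrix (α ⊕ β) (α ⊕ β) ℂ} (hS : S.PosDef)
    (hR : R.IsHermitian) (hRS : R * R = S⁻¹) :
    R * (1 - proj (R * (fromRows 1 0 : Matrix (α ⊕ β) α ℂ))) * R =
      fromBlocks 0 0 0 S.toBlocks₂₂⁻¹ := by
  rw [mul_one_sub_proj_mul hR, hRS, conjTranspose_fromRows_one_zero_mul_mul,
    fromRows_one_zero_mul_mul_conjTranspose]
  exact inv_sub_inv_mul_fromBlocks_mul_inv hS.toBlocks₂₂.isUnit hS.schurComplement.isUnit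

theorem submatrix_mul_one_sub_proj_submatrix_fromRows_mul {n : Type*} [Fintype n] [DecidableEq n]
    {S R : Matrix n n ℂ} (hS : S.PosDef) (hR : R.IsHermitian) (hRS : R * R = S⁻¹)
    (e : α ⊕ β ≃ n) :
    (R * (1 - proj (R * (fromRows 1 0 : Matrix (α ⊕ β) α ℂ).submatrix e.symm id)) * R).submatrix
        e e =
      fromBlocks 0 0 0 (S.submatrix (e ∘ Sum.inr) (e ∘ Sum.inr))⁻¹ := by
  have hRS' : R.submatrix e e * R.submatrix e e = (S.submatrix e e)⁻¹ := by
    rw [submatrix_mul_equiv, hRS, inv_submatrix_equiv]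
  rw [submatrix_mul_one_sub_proj_mul, submatrix_submatrix, e.symm_comp_self, Function.comp_id,
    submatrix_id_id, mul_one_sub_proj_fromRows_mul (hS.submatrix e.injective) (hR.submatrix e) hRS']
  rfl

end Compression

theorem Et_eq_fromRows (t r q : ℕ) : Et t r q = fromRows 1 0 := by
  ext (i | i) j <;> simp [Et, one_apply, eq_comm]

theorem Em_eq_submatrix_fromRows (t r q : ℕ) :
    Em t r q = (fromRows 1 0).submatrix (Equiv.sumAssoc (Fin t) (Fin r) (Fin q)).symm id := by
  ext (i | i | i) (j | j) <;> simp [Em, one_apply, eq_comm]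

theorem eq_one_sub_div_div_mul {K : Type*} [Field K] {x y : K} (hy : 1 + y ≠ 0)
    (hxy : 1 + x + y ≠ 0) :
    x = (1 - 1 / (1 + x / (1 + y))) / ((1 / (1 + x / (1 + y))) * (1 / (1 + y))) := by
  have hc : 1 + x / (1 + y) = (1 + x + y) / (1 + y) := by
    field_simp
    ring
  rw [hc]
  field_simp
  ring

theorem stmt9_general (t r q : ℕ)
    (z : Fin t ⊕ Fin r ⊕ Fin q → ℂ)
    (S : Matrix (Fin t ⊕ Fin r ⊕ Fin q) (Fin t ⊕ Fin r ⊕ Fin q) ℂ) (hS : S.PosDef)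
    (R : Matrix (Fin t ⊕ Fin r ⊕ Fin q) (Fin t ⊕ Fin r ⊕ Fin q) ℂ)
    (hR : R.PosDef) (hRS : R * R = S⁻¹) :
    star z ⬝ᵥ ((R * (1 - proj (R * Et t r q)) * R) *ᵥ z) -
        star z ⬝ᵥ ((R * (1 - proj (R * Em t r q)) * R) *ᵥ z) =
      (t1 z S).1 ∧
    star z ⬝ᵥ ((R * (1 - proj (R * Et t r q)) * R) *ᵥ z) -
        star z ⬝ᵥ ((R * (1 - proj (R * Em t r q)) * R) *ᵥ z) =
      (1 - 1 / (1 + (t1 z S).1 / (1 + (t1 z S).2))) /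
        ((1 / (1 + (t1 z S).1 / (1 + (t1 z S).2))) * (1 / (1 + (t1 z S).2))) := by
  have hM : S.toBlocks₂₂.PosDef := hS.toBlocks₂₂
  have h_t : star z ⬝ᵥ ((R * (1 - proj (R * Et t r q)) * R) *ᵥ z) =
      star (z ∘ Sum.inr) ⬝ᵥ (S.toBlocks₂₂⁻¹ *ᵥ (z ∘ Sum.inr)) := by
    rw [Et_eq_fromRows, mul_one_sub_proj_fromRows_mul hS hR.1 hRS,
      dotProduct_fromBlocks_zero_mulVec]
  have h_m : star z ⬝ᵥ ((R * (1 - proj (R * Em t r q)) * R) *ᵥ z) = (t1 z S).2 := by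
    rw [← dotProduct_submatrix_mulVec _ (Equiv.sumAssoc _ _ _), Em_eq_submatrix_fromRows,
      submatrix_mul_one_sub_proj_submatrix_fromRows_mul hS hR.1 hRS,
      dotProduct_fromBlocks_zero_mulVec]
    -- `Equiv.sumAssoc` sends `inr k` to `inr (inr k)` by definition: this is `blk3 z`, `S33 S`.
    rfl
  have h_diff : star z ⬝ᵥ ((R * (1 - proj (R * Et t r q)) * R) *ᵥ z) -
      star z ⬝ᵥ ((R * (1 - proj (R * Em t r q)) * R) *ᵥ z) = (t1 z S).1 := by
    rw [h_t, h_m, dotProduct_inv_mulVec_eq_add hM.1 hM.toBlocks₂₂.isUnit hM.schurComplement.isUnit]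
    exact add_sub_cancel_right _ _
  have hm₁ : 0 ≤ (t1 z S).1 := hM.schurComplement.inv.posSemidef.dotProduct_mulVec_nonneg _
  have hm₂ : 0 ≤ (t1 z S).2 := hM.toBlocks₂₂.inv.posSemidef.dotProduct_mulVec_nonneg _
  refine ⟨h_diff, h_diff.trans (eq_one_sub_div_div_mul ?_ ?_)⟩
  · exact (add_pos_of_pos_of_nonneg one_pos hm₂).ne'
  · exact (add_pos_of_pos_of_nonneg (add_pos_of_pos_of_nonneg one_pos hm₁) hm₂).ne'

/-- 2S-GLRT as a function of the maximal invariant: with `m₁`, `m₂` the two components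
of the maximal invariant, `p₁ = 1/(1 + m₁/(1 + m₂))`, `p₂ = 1/(1 + m₂)`, and
`R = S^{-1/2}` the Hermitian positive definite inverse square root of `S`,
`z†S^{-1/2}(I − P_{S^{-1/2}E_t})S^{-1/2}z − z†S^{-1/2}(I − P_{S^{-1/2}E_m})S^{-1/2}z
  = m₁ = (1 − p₁)/(p₁ p₂)`. -/
theorem stmt9 (t r q : ℕ) (ht : 1 ≤ t) (hr : 1 ≤ r) (hq : 1 ≤ q)
    (z : Fin t ⊕ Fin r ⊕ Fin q → ℂ)
    (S : Matrix (Fin t ⊕ Fin r ⊕ Fin q) (Fin t ⊕ Fin r ⊕ Fin q) ℂ) (hS : S.PosDef)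
    (R : Matrix (Fin t ⊕ Fin r ⊕ Fin q) (Fin t ⊕ Fin r ⊕ Fin q) ℂ)
    (hR : R.PosDef) (hRS : R * R = S⁻¹) :
    star z ⬝ᵥ ((R * (1 - proj (R * Et t r q)) * R) *ᵥ z) -
        star z ⬝ᵥ ((R * (1 - proj (R * Em t r q)) * R) *ᵥ z) =
      (t1 z S).1 ∧
    star z ⬝ᵥ ((R * (1 - proj (R * Et t r q)) * R) *ᵥ z) -
        star z ⬝ᵥ ((R * (1 - proj (R * Em t r q)) * R) *ᵥ z) =
      (1 - 1 / (1 + (t1 z S).1 / (1 + (t1 z S).2))) /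
        ((1 / (1 + (t1 z S).1 / (1 + (t1 z S).2))) * (1 / (1 + (t1 z S).2))) :=
  stmt9_general t r q z S hS R hR hRS
end
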